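/- arXiv:1906.10010 — 2 statements merged into one kernel-verified Lean document; each statement's English description precedes it below -/
import Mathlib

section
/- With the setup of the convexity lemma (unit-speed curve, nondecreasing angle φ with φ(0)=0, φ(L)=Ω ∈ (0,π)): fix s ∈ [0,L] and define γ(t) = ⟨X(t) − X(s), σ(X'(s))⟩. Then γ'(t) = sin(φ(t) − φ(s)) for all t, γ is nonincreasing on [0,s] and nondecreasing on [s,L], hence γ(t) ≥ 0 for all t ∈ [0,L]. -/
open Set

/-!
The derivative of `γ` is the normal component of the unit tangent,
`⟨(cos φ t, sin φ t), (-sin φ s, cos φ s)⟩ = sin (φ t - φ s)`. Since `φ` is nondecreasing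
with values in `[0, Ω] ⊆ [0, π)`, the angle `φ t - φ s` lies in `[-π, 0]` for `t ≤ s` and
in `[0, π]` for `t ≥ s`, which gives the signs of `γ'` on the two sides of `s`. So `γ`
attains its minimum on `[0, L]` at `s`, where it vanishes.
-/

namespace Real

lemma sin_sub_nonneg_of_le {x y : ℝ} (hy : 0 ≤ y) (hyx : y ≤ x) (hx : x ≤ π) :
    0 ≤ sin (x - y) :=
  sin_nonneg_of_nonneg_of_le_pi (sub_nonneg.2 hyx) (by linarith)

lemma sin_sub_nonpos_of_le {x y : ℝ} (hx : 0 ≤ x) (hxy : x ≤ y) (hy : y ≤ π) :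
    sin (x - y) ≤ 0 :=
  sin_nonpos_of_nonpos_of_neg_pi_le (sub_nonpos.2 hxy) (by linarith)

end Real

section Calculus

variable {f f' : ℝ → ℝ} {a b : ℝ}

lemma HasDerivWithinAt.prod_fst {X : ℝ → ℝ × ℝ} {v : ℝ × ℝ} {S : Set ℝ} {t : ℝ}
    (h : HasDerivWithinAt X v S t) : HasDerivWithinAt (fun u => (X u).1) v.1 S t := by
  simpa using h.hasFDerivWithinAt.fst.hasDerivWithinAt

lemma HasDerivWithinAt.prod_snd {X : ℝ → ℝ × ℝ} {v : ℝ × ℝ} {S : Set ℝ} {t : ℝ}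
    (h : HasDerivWithinAt X v S t) : HasDerivWithinAt (fun u => (X u).2) v.2 S t := by
  simpa using h.hasFDerivWithinAt.snd.hasDerivWithinAt

lemma monotoneOn_Icc_of_hasDerivWithinAt_nonneg
    (hf : ∀ x ∈ Icc a b, HasDerivWithinAt f (f' x) (Icc a b) x)
    (hf' : ∀ x ∈ Ioo a b, 0 ≤ f' x) : MonotoneOn f (Icc a b) :=
  monotoneOn_of_hasDerivWithinAt_nonneg (convex_Icc a b)
    (fun x hx => (hf x hx).continuousWithinAt)
    (fun x hx => (hf x (interior_subset hx)).mono interior_subset)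
    (by rwa [interior_Icc])

lemma antitoneOn_Icc_of_hasDerivWithinAt_nonpos
    (hf : ∀ x ∈ Icc a b, HasDerivWithinAt f (f' x) (Icc a b) x)
    (hf' : ∀ x ∈ Ioo a b, f' x ≤ 0) : AntitoneOn f (Icc a b) :=
  antitoneOn_of_hasDerivWithinAt_nonpos (convex_Icc a b)
    (fun x hx => (hf x hx).continuousWithinAt)
    (fun x hx => (hf x (interior_subset hx)).mono interior_subset)
    (by rwa [interior_Icc])

lemma HasDerivWithinAt.normal_component {X : ℝ → ℝ × ℝ} {S : Set ℝ} {t θ α : ℝ}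
    (p : ℝ × ℝ) (h : HasDerivWithinAt X (Real.cos θ, Real.sin θ) S t) :
    HasDerivWithinAt (fun u => ((X u).1 - p.1) * (-Real.sin α) + ((X u).2 - p.2) * Real.cos α)
      (Real.sin (θ - α)) S t := by
  refine (((h.prod_fst.sub_const p.1).mul_const (-Real.sin α)).add
    ((h.prod_snd.sub_const p.2).mul_const (Real.cos α))).congr_deriv ?_
  rw [Real.sin_sub]
  ring

end Calculus

lemma isMinOn_Icc_of_antitoneOn_of_monotoneOn {α β : Type*} [LinearOrder α] [Preorder β]
    {f : α → β} {a s b : α} (h₁ : AntitoneOn f (Icc a s)) (h₂ : MonotoneOn f (Icc s b))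
    (hs : s ∈ Icc a b) : IsMinOn f (Icc a b) s := by
  refine isMinOn_iff.2 fun t ht => ?_
  rcases le_total t s with hts | hst
  · exact h₁ ⟨ht.1, hts⟩ ⟨hs.1, le_rfl⟩ hts
  · exact h₂ ⟨le_rfl, hs.2⟩ ⟨hst, ht.2⟩ hst

theorem stmt2_general (L Ω : ℝ) (hΩ : Ω ∈ Ioo 0 Real.pi)
    (X : ℝ → ℝ × ℝ) (φ : ℝ → ℝ)
    (hmono : MonotoneOn φ (Icc 0 L))
    (hφ0 : φ 0 = 0) (hφL : φ L = Ω)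
    (hX : ∀ t ∈ Icc 0 L,
      HasDerivWithinAt X (Real.cos (φ t), Real.sin (φ t)) (Icc 0 L) t)
    (s : ℝ) (hs : s ∈ Icc 0 L)
    (γ : ℝ → ℝ)
    (hγ : γ = fun t =>
      ((X t).1 - (X s).1) * (-Real.sin (φ s)) +
      ((X t).2 - (X s).2) * Real.cos (φ s)) :
    (∀ t ∈ Icc 0 L,
      HasDerivWithinAt γ (Real.sin (φ t - φ s)) (Icc 0 L) t) ∧
    AntitoneOn γ (Icc 0 s) ∧
    MonotoneOn γ (Icc s L) ∧
    ∀ t ∈ Icc 0 L, 0 ≤ γ t := by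
  have hL : (0 : ℝ) ≤ L := hs.1.trans hs.2
  have hφ : ∀ t ∈ Icc 0 L, 0 ≤ φ t ∧ φ t ≤ Real.pi := fun t ht =>
    ⟨hφ0 ▸ hmono (left_mem_Icc.2 hL) ht ht.1,
      (hmono ht (right_mem_Icc.2 hL) ht.2).trans (hφL ▸ hΩ.2.le)⟩
  have hderiv : ∀ t ∈ Icc 0 L, HasDerivWithinAt γ (Real.sin (φ t - φ s)) (Icc 0 L) t :=
    fun t ht => hγ ▸ (hX t ht).normal_component (X s)
  have hleft : Icc 0 s ⊆ Icc 0 L := Icc_subset_Icc le_rfl hs.2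
  have hright : Icc s L ⊆ Icc 0 L := Icc_subset_Icc hs.1 le_rfl
  have hanti : AntitoneOn γ (Icc 0 s) :=
    antitoneOn_Icc_of_hasDerivWithinAt_nonpos (fun t ht => (hderiv t (hleft ht)).mono hleft)
      fun t ht => by
        have ht' := hleft (Ioo_subset_Icc_self ht)
        exact Real.sin_sub_nonpos_of_le (hφ t ht').1 (hmono ht' hs ht.2.le) (hφ s hs).2
  have hmon : MonotoneOn γ (Icc s L) :=
    monotoneOn_Icc_of_hasDerivWithinAt_nonneg (fun t ht => (hderiv t (hright ht)).mono hright)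
      fun t ht => by
        have ht' := hright (Ioo_subset_Icc_self ht)
        exact Real.sin_sub_nonneg_of_le (hφ s hs).1 (hmono hs ht' ht.1.le) (hφ t ht').2
  have hγs : γ s = 0 := by simp [hγ]
  exact ⟨hderiv, hanti, hmon, fun t ht =>
    hγs ▸ isMinOn_iff.1 (isMinOn_Icc_of_antitoneOn_of_monotoneOn hanti hmon hs) t ht⟩

/-- With the setup of the convexity lemma, fix `s ∈ [0,L]` and set
`γ(t) = ⟨X(t) − X(s), σ(X'(s))⟩`. Then `γ'(t) = sin(φ(t) − φ(s))`, `γ` is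
nonincreasing on `[0,s]`, nondecreasing on `[s,L]`, and hence `γ ≥ 0` on `[0,L]`. -/
theorem stmt2 (L Ω : ℝ) (hL : 0 < L) (hΩ : Ω ∈ Ioo 0 Real.pi)
    (X : ℝ → ℝ × ℝ) (φ : ℝ → ℝ)
    (hφc : ContinuousOn φ (Icc 0 L))
    (hmono : MonotoneOn φ (Icc 0 L))
    (hφ0 : φ 0 = 0) (hφL : φ L = Ω)
    (hX : ∀ t ∈ Icc 0 L,
      HasDerivWithinAt X (Real.cos (φ t), Real.sin (φ t)) (Icc 0 L) t)
    (s : ℝ) (hs : s ∈ Icc 0 L)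
    (γ : ℝ → ℝ)
    (hγ : γ = fun t =>
      ((X t).1 - (X s).1) * (-Real.sin (φ s)) +
      ((X t).2 - (X s).2) * Real.cos (φ s)) :
    (∀ t ∈ Icc 0 L,
      HasDerivWithinAt γ (Real.sin (φ t - φ s)) (Icc 0 L) t) ∧
    AntitoneOn γ (Icc 0 s) ∧
    MonotoneOn γ (Icc s L) ∧
    ∀ t ∈ Icc 0 L, 0 ≤ γ t :=
  stmt2_general L Ω hΩ X φ hmono hφ0 hφL hX s hs γ hγ
end

section
/- Uniform positive lower bound for maximal curvature: there exists δ > 0 depending only on O, A, B (indeed δ = Ω cos(Ω/2)/b̃ works) such that every curve X ∈ 𝓔 satisfies ‖ ‖X''‖ ‖_{L^∞(0,L)} ≥ δ. -/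
/-!
Write `w = α e^{iΩ/2}` for the unit bisector of the endpoint tangents. Since the tangent angle
`φ` increases from `0` to `Ω`, it stays within `Ω/2` of the bisector angle, so the component of
the unit tangent `α e^{iφ}` along `w` is at least `cos (Ω/2)`; integrating the tangent along the curve gives
`L cos (Ω/2) ≤ b̃`. On the other hand `Ω = φ L - φ 0 ≤ K L` for every Lipschitz constant `K` of
`φ`. Hence `K ≥ Ω / L ≥ Ω cos (Ω/2) / b̃`, and `b̃ > 0` because 𝓔 is nonempty.
-/

open Set

/-- The class 𝓔: unit-speed `W^{2,∞}` planar curves (identified with ℂ) from `A` to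
`B` with initial tangent `α`, nondecreasing tangent angle `φ`, `φ(0)=0`, `φ(L)=Ω`. -/
structure CurveE (A B α : ℂ) (Ω : ℝ) where
  L : ℝ
  X : ℝ → ℂ
  φ : ℝ → ℝ
  hL : 0 < L
  hX0 : X 0 = A
  hXL : X L = B
  hφ0 : φ 0 = 0
  hφL : φ L = Ω
  hmono : MonotoneOn φ (Icc 0 L)
  hcont : ContinuousOn φ (Icc 0 L)
  hderiv : ∀ s ∈ Icc 0 L,
    HasDerivWithinAt X (α * Complex.exp ((φ s : ℂ) * Complex.I)) (Icc 0 L) s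
  hW2 : ∃ K : ℝ, ∀ s ∈ Icc 0 L, ∀ t ∈ Icc 0 L, |φ s - φ t| ≤ K * |s - t|

open ComplexConjugate

theorem mul_sub_le_re_sub_mul_conj_of_hasDerivWithinAt {X u : ℝ → ℂ} {a b m : ℝ} (w : ℂ)
    (hab : a ≤ b) (hX : ∀ s ∈ Icc a b, HasDerivWithinAt X (u s) (Icc a b) s)
    (hm : ∀ s ∈ Icc a b, m ≤ (u s * conj w).re) :
    m * (b - a) ≤ ((X b - X a) * conj w).re := by
  have hg : ∀ s ∈ Icc a b, HasDerivWithinAt (fun t ↦ (X t * conj w).re - m * t)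
      ((u s * conj w).re - m) (Icc a b) s := fun s hs ↦
    (Complex.reCLM.hasFDerivAt.comp_hasDerivWithinAt s
      ((hX s hs).mul_const (conj w))).sub (hasDerivAt_const_mul m).hasDerivWithinAt
  have hmono : MonotoneOn (fun t ↦ (X t * conj w).re - m * t) (Icc a b) :=
    monotoneOn_of_hasDerivWithinAt_nonneg (convex_Icc a b)
      (fun s hs ↦ (hg s hs).continuousWithinAt)
      (fun s hs ↦ (hg s (interior_subset hs)).mono interior_subset)
      (fun s hs ↦ sub_nonneg.2 (hm s (interior_subset hs)))
  have := hmono (left_mem_Icc.2 hab) (right_mem_Icc.2 hab) hab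
  simp only [sub_mul, Complex.sub_re] at this ⊢
  linarith

theorem Real.cos_le_cos_of_abs_le {x y : ℝ} (hxy : |x| ≤ y) (hy : y ≤ Real.pi) :
    cos y ≤ cos x := by
  rw [← Real.cos_abs x]
  exact Real.cos_le_cos_of_nonneg_of_le_pi (abs_nonneg x) hy hxy

theorem re_mul_exp_mul_conj_mul_exp {α : ℂ} (hα : ‖α‖ = 1) (x y : ℝ) :
    (α * Complex.exp (x * Complex.I) * conj (α * Complex.exp (y * Complex.I))).re
      = Real.cos (x - y) := by
  have hαα : α * conj α = 1 := by
    rw [Complex.mul_conj, Complex.normSq_eq_norm_sq, hα]; norm_num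
  rw [map_mul, ← Complex.exp_conj, map_mul, Complex.conj_ofReal, Complex.conj_I,
    mul_mul_mul_comm, hαα, one_mul, ← Complex.exp_add, ← Complex.exp_ofReal_mul_I_re]
  congr 3
  push_cast
  ring

namespace CurveE

variable {A B α : ℂ} {Ω : ℝ} (c : CurveE A B α Ω)

theorem φ_mem_Icc {s : ℝ} (hs : s ∈ Icc 0 c.L) : c.φ s ∈ Icc 0 Ω := by
  have hL := c.hL.le
  constructor
  · simpa only [c.hφ0] using c.hmono (left_mem_Icc.2 hL) hs hs.1
  · simpa only [c.hφL] using c.hmono hs (right_mem_Icc.2 hL) hs.2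

theorem length_mul_cos_le (hα : ‖α‖ = 1) (hΩ : Ω ≤ 2 * Real.pi) :
    c.L * Real.cos (Ω / 2) ≤
      ((B - A) * conj (α * Complex.exp (((Ω / 2 : ℝ) : ℂ) * Complex.I))).re := by
  have hbound : ∀ s ∈ Icc 0 c.L, Real.cos (Ω / 2) ≤
      (α * Complex.exp ((c.φ s : ℂ) * Complex.I) *
        conj (α * Complex.exp (((Ω / 2 : ℝ) : ℂ) * Complex.I))).re := fun s hs ↦ by
    obtain ⟨hφ0, hφΩ⟩ := c.φ_mem_Icc hs
    rw [re_mul_exp_mul_conj_mul_exp hα]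
    exact Real.cos_le_cos_of_abs_le (abs_le.2 ⟨by linarith, by linarith⟩) (by linarith)
  simpa only [sub_zero, mul_comm c.L, c.hX0, c.hXL] using
    mul_sub_le_re_sub_mul_conj_of_hasDerivWithinAt _ c.hL.le c.hderiv hbound

theorem le_mul_length {K : ℝ}
    (hK : ∀ s ∈ Icc 0 c.L, ∀ t ∈ Icc 0 c.L, |c.φ s - c.φ t| ≤ K * |s - t|) :
    Ω ≤ K * c.L := by
  have hturn := hK c.L (right_mem_Icc.2 c.hL.le) 0 (left_mem_Icc.2 c.hL.le)
  rw [c.hφL, c.hφ0, sub_zero, sub_zero, abs_of_pos c.hL] at hturn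
  exact (le_abs_self Ω).trans hturn

end CurveE

theorem stmt19_general (O A B : ℂ) (hOA : O ≠ A)
    (α : ℂ)
    (hα : α = (O - A) / (‖O - A‖ : ℂ))
    (Ω : ℝ) (hΩ : Ω ∈ Ioo 0 Real.pi)
    (hne : Nonempty (CurveE A B α Ω))
    (btilde δ : ℝ)
    (hb : btilde = ((B - A) *
      (starRingEnd ℂ) (α * Complex.exp (((Ω / 2 : ℝ) : ℂ) * Complex.I))).re)
    (hδ : δ = Ω * Real.cos (Ω / 2) / btilde) :
    0 < δ ∧
    ∀ c : CurveE A B α Ω, ∀ K : ℝ,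
      (∀ s ∈ Icc 0 c.L, ∀ t ∈ Icc 0 c.L, |c.φ s - c.φ t| ≤ K * |s - t|) →
      δ ≤ K := by
  have hα1 : ‖α‖ = 1 := by
    rw [hα, norm_div, Complex.norm_real, norm_norm,
      div_self (norm_ne_zero_iff.2 (sub_ne_zero.2 hOA))]
  have hcos : 0 < Real.cos (Ω / 2) :=
    Real.cos_pos_of_mem_Ioo ⟨by linarith [hΩ.1, Real.pi_pos], by linarith [hΩ.2]⟩
  have hlen : ∀ c : CurveE A B α Ω, c.L * Real.cos (Ω / 2) ≤ btilde := fun c ↦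
    hb ▸ c.length_mul_cos_le hα1 (by linarith [hΩ.2, Real.pi_pos])
  obtain ⟨c₀⟩ := hne
  have hb₀ : 0 < btilde := (mul_pos c₀.hL hcos).trans_le (hlen c₀)
  refine ⟨hδ ▸ div_pos (mul_pos hΩ.1 hcos) hb₀, fun c K hK ↦ ?_⟩
  calc δ ≤ Ω * Real.cos (Ω / 2) / (c.L * Real.cos (Ω / 2)) :=
        hδ ▸ div_le_div_of_nonneg_left (mul_pos hΩ.1 hcos).le (mul_pos c.hL hcos) (hlen c)
    _ = Ω / c.L := mul_div_mul_right _ _ hcos.ne'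
    _ ≤ K := (div_le_iff₀ c.hL).2 (c.le_mul_length hK)

/-- Uniform positive lower bound on the maximal curvature over 𝓔: with
`b̃ = ⟨B − A, α e^{iΩ/2}⟩` (the component of `B − A` along the bisector direction of
the endpoint tangents), the constant `δ = Ω cos(Ω/2)/b̃ > 0` bounds from below every
Lipschitz constant of the tangent angle of every curve of 𝓔. -/
theorem stmt19 (O A B : ℂ) (hOA : O ≠ A) (hOB : O ≠ B) (hAB : A ≠ B)
    (α β : ℂ)
    (hα : α = (O - A) / (‖O - A‖ : ℂ))
    (hβ : β = (B - O) / (‖B - O‖ : ℂ))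
    (Ω : ℝ) (hΩ : Ω ∈ Ioo 0 Real.pi)
    (hang : β = α * Complex.exp ((Ω : ℂ) * Complex.I))
    (hne : Nonempty (CurveE A B α Ω))
    (btilde δ : ℝ)
    (hb : btilde = ((B - A) *
      (starRingEnd ℂ) (α * Complex.exp (((Ω / 2 : ℝ) : ℂ) * Complex.I))).re)
    (hδ : δ = Ω * Real.cos (Ω / 2) / btilde) :
    0 < δ ∧
    ∀ c : CurveE A B α Ω, ∀ K : ℝ,
      (∀ s ∈ Icc 0 c.L, ∀ t ∈ Icc 0 c.L, |c.φ s - c.φ t| ≤ K * |s - t|) →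
      δ ≤ K :=
  stmt19_general O A B hOA α hα Ω hΩ hne btilde δ hb hδ
end
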